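/- arXiv:2503.11637 — 4 statements merged into one kernel-verified Lean document; each statement's English description precedes it below -/
import Mathlib

section
/- Let h : ℝ^d → ℝ be twice continuously differentiable with gradient ∇h and Hessian ∇²h. Let z₀ ∈ ℝ^d satisfy ∇h(z₀) = 0, and suppose A₀ := ∇²h(z₀) is symmetric positive definite. Let 0 ≤ k < 1 and let z ∈ ℝ^d be such that ‖I − A₀⁻¹ ∇²h(z')‖_op ≤ k for every point z' on the line segment from z₀ to z, where ‖·‖_op is the operator norm. If ‖∇h(z)‖ ≤ ε for some ε ≥ 0, then ‖z − z₀‖ ≤ ε / ((1 − k) · λ_min(A₀)), where λ_min(A₀) denotes the smallest eigenvalue of A₀. -/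
/-!
The Newton-type map `φ w = w - A₀⁻¹ ∇h(w)` has derivative `I - A₀⁻¹ ∇²h(w)`, so it is
`k`-Lipschitz on the segment `[z₀, z]`, and it fixes `z₀`. Hence
`‖(z - z₀) - A₀⁻¹ ∇h(z)‖ ≤ k ‖z - z₀‖`, that is `(1 - k) ‖z - z₀‖ ≤ ‖A₀⁻¹ ∇h(z)‖`, and the
spectral theorem gives `λ_min(A₀) ‖A₀⁻¹ y‖ ≤ ‖y‖`.
-/

open Matrix
open scoped ComplexOrder

namespace LinearMap.IsSymmetric

variable {𝕜 E : Type*} [RCLike 𝕜] [NormedAddCommGroup E] [InnerProductSpace 𝕜 E]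
  [FiniteDimensional 𝕜 E] {T : E →ₗ[𝕜] E} {n : ℕ}

theorem iInf_eigenvalues_mul_norm_le (hT : T.IsSymmetric) (hn : Module.finrank 𝕜 E = n)
    (x : E) : (⨅ i, hT.eigenvalues hn i) * ‖x‖ ≤ ‖T x‖ := by
  set μ := ⨅ i, hT.eigenvalues hn i
  rcases le_or_gt μ 0 with hμ | hμ
  · exact (mul_nonpos_of_nonpos_of_nonneg hμ (norm_nonneg x)).trans (norm_nonneg _)
  set b := hT.eigenvectorBasis hn
  rw [← pow_le_pow_iff_left₀ (by positivity) (norm_nonneg _) two_ne_zero]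
  calc (μ * ‖x‖) ^ 2 = ∑ i, μ ^ 2 * ‖b.repr x i‖ ^ 2 := by
        rw [mul_pow, ← b.repr.norm_map, EuclideanSpace.norm_sq_eq, Finset.mul_sum]
    _ ≤ ∑ i, ‖(hT.eigenvalues hn i : 𝕜) * b.repr x i‖ ^ 2 := by
        gcongr with i
        rw [norm_mul, mul_pow, RCLike.norm_ofReal, sq_abs]
        gcongr
        exact ciInf_le (Finite.bddBelow_range _) i
    _ = ‖T x‖ ^ 2 := by
        simp_rw [b, ← hT.eigenvectorBasis_apply_self_apply]
        rw [← (hT.eigenvectorBasis hn).repr.norm_map (T x), EuclideanSpace.norm_sq_eq]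

end LinearMap.IsSymmetric

namespace Matrix

variable {𝕜 : Type*} [RCLike 𝕜] {n : Type*} [Fintype n] [DecidableEq n] {A : Matrix n n 𝕜}

theorem IsHermitian.iInf_eigenvalues_mul_norm_le (hA : A.IsHermitian)
    (x : EuclideanSpace 𝕜 n) :
    (⨅ i, hA.eigenvalues i) * ‖x‖ ≤ ‖toEuclideanCLM (𝕜 := 𝕜) A x‖ := by
  have := (isSymmetric_toEuclideanLin_iff.mpr hA).iInf_eigenvalues_mul_norm_le
    finrank_euclideanSpace x
  rwa [← (Fintype.equivOfCardEq (Fintype.card_fin _)).symm.iInf_comp] at this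

theorem PosDef.iInf_eigenvalues_pos [Nonempty n] (hA : A.PosDef) :
    0 < ⨅ i, hA.isHermitian.eigenvalues i := by
  obtain ⟨i, hi⟩ := exists_eq_ciInf_of_finite (f := hA.isHermitian.eigenvalues)
  exact hi ▸ hA.eigenvalues_pos i

theorem PosDef.iInf_eigenvalues_mul_norm_toEuclideanCLM_inv_le (hA : A.PosDef)
    (y : EuclideanSpace 𝕜 n) :
    (⨅ i, hA.isHermitian.eigenvalues i) * ‖toEuclideanCLM (𝕜 := 𝕜) A⁻¹ y‖ ≤ ‖y‖ := by
  have hAA : toEuclideanCLM (𝕜 := 𝕜) A (toEuclideanCLM (𝕜 := 𝕜) A⁻¹ y) = y := by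
    rw [← mul_apply_eq_comp, ← map_mul,
      mul_nonsing_inv _ ((isUnit_iff_isUnit_det A).mp hA.isUnit), map_one]
    rfl
  simpa only [hAA] using
    hA.isHermitian.iInf_eigenvalues_mul_norm_le (toEuclideanCLM (𝕜 := 𝕜) A⁻¹ y)

end Matrix

theorem one_sub_mul_norm_sub_le_of_norm_id_sub_comp_fderiv_le
    {E F : Type*} [NormedAddCommGroup E] [NormedSpace ℝ E] [NormedAddCommGroup F]
    [NormedSpace ℝ F] {f : E → F} {f' : E → E →L[ℝ] F} {L : F →L[ℝ] E} {x₀ x : E} {k : ℝ}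
    (hf : ∀ w ∈ segment ℝ x₀ x, HasFDerivWithinAt f (f' w) (segment ℝ x₀ x) w)
    (hk : ∀ w ∈ segment ℝ x₀ x, ‖ContinuousLinearMap.id ℝ E - L.comp (f' w)‖ ≤ k)
    (hx₀ : f x₀ = 0) :
    (1 - k) * ‖x - x₀‖ ≤ ‖L (f x)‖ := by
  have hφ (w) (hw : w ∈ segment ℝ x₀ x) : HasFDerivWithinAt (fun v ↦ v - L (f v))
      (ContinuousLinearMap.id ℝ E - L.comp (f' w)) (segment ℝ x₀ x) w :=
    (hasFDerivWithinAt_id w _).sub (L.hasFDerivAt.comp_hasFDerivWithinAt w (hf w hw))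
  have hmvt := (convex_segment x₀ x).norm_image_sub_le_of_norm_hasFDerivWithin_le hφ hk
    (left_mem_segment ℝ x₀ x) (right_mem_segment ℝ x₀ x)
  rw [hx₀, map_zero, sub_zero, sub_right_comm] at hmvt
  linarith [norm_sub_norm_le (x - x₀) (L (f x))]

theorem gradient_norm_controls_distance_general
    {d : ℕ}
    (h : EuclideanSpace ℝ (Fin d) → ℝ)
    (Hess : EuclideanSpace ℝ (Fin d) → Matrix (Fin d) (Fin d) ℝ)
    (hHess : ∀ w, HasFDerivAt (gradient h) (Matrix.toEuclideanCLM (𝕜 := ℝ) (Hess w)) w)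
    (z₀ z : EuclideanSpace ℝ (Fin d))
    (hcrit : gradient h z₀ = 0)
    (hposdef : (Hess z₀).PosDef)
    (k : ℝ) (hk1 : k < 1)
    (hseg : ∀ z' ∈ segment ℝ z₀ z,
      ‖(Matrix.toEuclideanCLM (𝕜 := ℝ) (1 - (Hess z₀)⁻¹ * Hess z') :
        EuclideanSpace ℝ (Fin d) →L[ℝ] EuclideanSpace ℝ (Fin d))‖ ≤ k)
    (ε : ℝ) (hgrad : ‖gradient h z‖ ≤ ε) :
    ‖z - z₀‖ ≤ ε / ((1 - k) * ⨅ i, hposdef.isHermitian.eigenvalues i) := by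
  rcases isEmpty_or_nonempty (Fin d) with _ | _
  · simp [Subsingleton.elim z z₀]
  set μ := ⨅ i, hposdef.isHermitian.eigenvalues i
  have hμ : 0 < μ := hposdef.iInf_eigenvalues_pos
  have hnewton : (1 - k) * ‖z - z₀‖ ≤ ‖toEuclideanCLM (𝕜 := ℝ) (Hess z₀)⁻¹ (gradient h z)‖ := by
    refine one_sub_mul_norm_sub_le_of_norm_id_sub_comp_fderiv_le
      (fun w _ ↦ (hHess w).hasFDerivWithinAt) (fun w hw ↦ ?_) hcrit
    simpa only [map_sub, map_one, map_mul, ContinuousLinearMap.one_def,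
      ContinuousLinearMap.mul_def] using hseg w hw
  rw [le_div_iff₀ (mul_pos (sub_pos.mpr hk1) hμ)]
  calc ‖z - z₀‖ * ((1 - k) * μ) = μ * ((1 - k) * ‖z - z₀‖) := by ring
    _ ≤ μ * ‖toEuclideanCLM (𝕜 := ℝ) (Hess z₀)⁻¹ (gradient h z)‖ := by gcongr
    _ ≤ ε := (hposdef.iInf_eigenvalues_mul_norm_toEuclideanCLM_inv_le _).trans hgrad

/-- **Theorem 1 (gradient-bridged relaxation bound).**
If `h` is twice continuously differentiable with `∇h(z₀) = 0` and symmetric positive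
definite Hessian `A₀ = ∇²h(z₀)`, and `‖I − A₀⁻¹ ∇²h(z')‖_op ≤ k < 1` along the segment
from `z₀` to `z`, then `‖∇h(z)‖ ≤ ε` implies `‖z − z₀‖ ≤ ε / ((1 − k) λ_min(A₀))`. -/
theorem gradient_norm_controls_distance
    {d : ℕ} (hd : 0 < d)
    (h : EuclideanSpace ℝ (Fin d) → ℝ)
    (hsmooth : ContDiff ℝ 2 h)
    (Hess : EuclideanSpace ℝ (Fin d) → Matrix (Fin d) (Fin d) ℝ)
    (hHess : ∀ w, HasFDerivAt (gradient h) (Matrix.toEuclideanCLM (𝕜 := ℝ) (Hess w)) w)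
    (z₀ z : EuclideanSpace ℝ (Fin d))
    (hcrit : gradient h z₀ = 0)
    (hposdef : (Hess z₀).PosDef)
    (hsymm : (Hess z₀).IsSymm)
    (k : ℝ) (hk0 : 0 ≤ k) (hk1 : k < 1)
    (hseg : ∀ z' ∈ segment ℝ z₀ z,
      ‖(Matrix.toEuclideanCLM (𝕜 := ℝ) (1 - (Hess z₀)⁻¹ * Hess z') :
        EuclideanSpace ℝ (Fin d) →L[ℝ] EuclideanSpace ℝ (Fin d))‖ ≤ k)
    (ε : ℝ) (hε : 0 ≤ ε) (hgrad : ‖gradient h z‖ ≤ ε) :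
    ‖z - z₀‖ ≤ ε / ((1 - k) * ⨅ i, hposdef.isHermitian.eigenvalues i) :=
  gradient_norm_controls_distance_general h Hess hHess z₀ z hcrit hposdef k hk1 hseg ε hgrad
end

section
/- For all τ > 0, β > 0 and λ ≥ 0, the double Gaussian-type integral evaluates exactly as ∫_ℝ ∫_ℝ exp( −(y − z)²/(2τ) − z²/(2β) − λ((z − y)/τ + z/β)² ) dz dy = 2π τ β (τβ + 2λ(τ+β))^{−1/2}. In particular, the integral equals 2π·m(β) with m(β) = τβ{τβ + 2λ(τ+β)}^{−1/2}, the calibration factor making the gradient-bridged normal means model satisfy the marginalization property. -/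
open MeasureTheory

lemma gauss_quad_aux (a b c : ℝ) (ha : 0 < a) :
    (∫ x : ℝ, Real.exp (-(a * x ^ 2 + b * x + c)))
      = Real.sqrt (Real.pi / a) * Real.exp (b ^ 2 / (4 * a) - c) := by
  have h : ∀ x : ℝ, Real.exp (-(a * x ^ 2 + b * x + c))
      = Real.exp (-a * (x + b / (2 * a)) ^ 2) * Real.exp (b ^ 2 / (4 * a) - c) := by
    intro x
    rw [← Real.exp_add]
    congr 1
    field_simp
    ring
  simp_rw [h]
  rw [integral_mul_const]
  have ht := MeasureTheory.integral_add_right_eq_self (μ := volume)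
    (fun x : ℝ => Real.exp (-a * x ^ 2)) (b / (2 * a))
  rw [ht, integral_gaussian]

/-- The double Gaussian-type integral of the scalar gradient-bridged normal
means kernel evaluates to `2π τ β (τβ + 2λ(τ+β))^{-1/2} = 2π·m(β)`. -/
theorem gradient_bridged_normal_means_double_integral
    (τ β lam : ℝ) (hτ : 0 < τ) (hβ : 0 < β) (hlam : 0 ≤ lam) :
    (∫ y : ℝ, ∫ z : ℝ,
        Real.exp (-((y - z) ^ 2 / (2 * τ)) - z ^ 2 / (2 * β)
          - lam * ((z - y) / τ + z / β) ^ 2))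
      = 2 * Real.pi * τ * β * (τ * β + 2 * lam * (τ + β)) ^ (-(1 : ℝ) / 2) ∧
    (∫ y : ℝ, ∫ z : ℝ,
        Real.exp (-((y - z) ^ 2 / (2 * τ)) - z ^ 2 / (2 * β)
          - lam * ((z - y) / τ + z / β) ^ 2))
      = 2 * Real.pi * (τ * β * (τ * β + 2 * lam * (τ + β)) ^ (-(1 : ℝ) / 2)) := by
  have hτ' := hτ.ne'
  have hβ' := hβ.ne'
  set S : ℝ := τ * β + 2 * lam * (τ + β) with hSdef
  have hS : 0 < S := by positivity
  set A : ℝ := 1 / (2 * τ) + 1 / (2 * β) + lam * (1 / τ + 1 / β) ^ 2 with hAdef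
  set B : ℝ := 1 / τ + 2 * lam * (1 / τ + 1 / β) / τ with hBdef
  set C : ℝ := 1 / (2 * τ) + lam / τ ^ 2 with hCdef
  have hA : 0 < A := by positivity
  set E : ℝ := C - B ^ 2 / (4 * A) with hEdef
  have hAE : A * E = S / (4 * τ ^ 2 * β ^ 2) := by
    rw [hEdef, hAdef, hBdef, hCdef, hSdef]
    field_simp
    ring
  have hE : 0 < E := by
    have h1 : 0 < A * E := by rw [hAE]; positivity
    nlinarith
  have hinner : ∀ y : ℝ,
      (∫ z : ℝ, Real.exp (-((y - z) ^ 2 / (2 * τ)) - z ^ 2 / (2 * β)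
          - lam * ((z - y) / τ + z / β) ^ 2))
        = Real.sqrt (Real.pi / A) * Real.exp (B ^ 2 * y ^ 2 / (4 * A) - C * y ^ 2) := by
    intro y
    have hc : ∀ z : ℝ,
        Real.exp (-((y - z) ^ 2 / (2 * τ)) - z ^ 2 / (2 * β)
          - lam * ((z - y) / τ + z / β) ^ 2)
        = Real.exp (-(A * z ^ 2 + (-(B * y)) * z + C * y ^ 2)) := by
      intro z
      congr 1
      rw [hAdef, hBdef, hCdef]
      field_simp
      ring
    simp_rw [hc]
    rw [gauss_quad_aux _ _ _ hA]
    congr 2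
    ring
  simp_rw [hinner]
  rw [integral_const_mul]
  have hc2 : ∀ y : ℝ, Real.exp (B ^ 2 * y ^ 2 / (4 * A) - C * y ^ 2)
      = Real.exp (-(E * y ^ 2 + 0 * y + 0)) := by
    intro y
    congr 1
    rw [hEdef]
    ring
  simp_rw [hc2]
  rw [gauss_quad_aux _ _ _ hE]
  have key : Real.sqrt (Real.pi / A) * (Real.sqrt (Real.pi / E)
        * Real.exp (0 ^ 2 / (4 * E) - 0))
      = 2 * Real.pi * τ * β * S ^ (-(1 : ℝ) / 2) := by
    have hexp : Real.exp (0 ^ 2 / (4 * E) - 0) = 1 := by norm_num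
    rw [hexp, mul_one, ← Real.sqrt_mul (by positivity)]
    have hval : Real.pi / A * (Real.pi / E) = (2 * Real.pi * τ * β) ^ 2 / S := by
      have : Real.pi / A * (Real.pi / E) = Real.pi ^ 2 / (A * E) := by
        field_simp
      rw [this, hAE]
      field_simp
      ring
    rw [hval, Real.sqrt_div (by positivity),
      Real.sqrt_sq (by positivity : (0:ℝ) ≤ 2 * Real.pi * τ * β)]
    rw [show (-(1 : ℝ) / 2) = -(1 / 2) by ring, Real.rpow_neg hS.le,
      ← Real.sqrt_eq_rpow, div_eq_mul_inv]
  exact ⟨by rw [key], by rw [key]; ring⟩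
end

section
/- Let y, β ∈ ℝ^{p×m} and let γ ∈ ℝ^{p×p} be symmetric with γ + y yᵀ positive definite. Then the Lagrange dual function of the orthogonal Procrustes problem satisfies the closed form inf_{R ∈ ℝ^{p×p}} [ ‖R y − β‖²_F + tr{γ (Rᵀ R − I)} ] = tr(βᵀβ) − tr(γ) − tr{ y βᵀ β yᵀ (γ + y yᵀ)⁻¹ }. -/
/-!
With `A = γ + yyᵀ` the Lagrangian is a quadratic form in `R` with "Hessian" `A`; completing the
square with centre `C = βyᵀA⁻¹` gives `L R = tr((R - C) A (R - C)ᵀ) + T`, where `T` is the claimed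
value. Since `A` is positive definite the first term is nonnegative and vanishes at `R = C`, so
`T` is even the minimum of `L`.
-/

open Matrix

namespace Matrix

variable {α : Type*} [CommRing α] {k n m : Type*} [Fintype n] [Fintype m] [DecidableEq n]

theorem trace_procrustes_lagrangian [Fintype k] (R : Matrix k n α) (y : Matrix n m α)
    (β : Matrix k m α) (γ : Matrix n n α) :
    ((R * y - β)ᵀ * (R * y - β)).trace + (γ * (Rᵀ * R - 1)).trace
      = (R * (γ + y * yᵀ) * Rᵀ).trace - (R * (y * βᵀ)).trace - (β * yᵀ * Rᵀ).trace
        + (βᵀ * β).trace - γ.trace := by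
  have hγ : (R * γ * Rᵀ).trace = (γ * (Rᵀ * R)).trace := by
    rw [trace_mul_comm, ← Matrix.mul_assoc, trace_mul_comm]
  have hy : (R * (y * yᵀ) * Rᵀ).trace = ((R * y)ᵀ * (R * y)).trace := by
    rw [← Matrix.mul_assoc, Matrix.mul_assoc, trace_mul_comm, transpose_mul]
  have hyβ : (R * (y * βᵀ)).trace = (βᵀ * (R * y)).trace := by
    rw [← Matrix.mul_assoc, trace_mul_comm]
  have hβy : (β * yᵀ * Rᵀ).trace = ((R * y)ᵀ * β).trace := by
    rw [Matrix.mul_assoc, trace_mul_comm, transpose_mul]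
  rw [Matrix.mul_add, Matrix.add_mul, trace_add, hγ, hy, hyβ, hβy]
  simp only [transpose_sub, Matrix.sub_mul, Matrix.mul_sub, Matrix.mul_one, trace_sub]
  ring

theorem sub_mul_nonsing_inv_mul_mul_transpose {A : Matrix n n α} (hA : A.IsSymm)
    (hdet : IsUnit A.det) (R B : Matrix k n α) :
    (R - B * A⁻¹) * A * (R - B * A⁻¹)ᵀ
      = R * A * Rᵀ - R * Bᵀ - B * Rᵀ + B * A⁻¹ * Bᵀ := by
  have hinv : (B * A⁻¹)ᵀ = A⁻¹ * Bᵀ := by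
    rw [transpose_mul, transpose_nonsing_inv, hA.eq]
  rw [transpose_sub, hinv]
  simp only [Matrix.sub_mul, Matrix.mul_sub, Matrix.mul_assoc, mul_nonsing_inv_cancel_left _ _ hdet,
    nonsing_inv_mul A hdet, Matrix.mul_one]
  abel

end Matrix

theorem isLeast_range_trace_mul_mul_transpose_add {k n : Type*} [Fintype k] [Fintype n]
    {A : Matrix n n ℝ} (hA : A.PosSemidef) (C : Matrix k n ℝ) (T : ℝ) :
    IsLeast (Set.range fun R => ((R - C) * A * (R - C)ᵀ).trace + T) T := by
  refine ⟨⟨C, by simp⟩, ?_⟩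
  rintro _ ⟨R, rfl⟩
  have hnonneg : 0 ≤ ((R - C) * A * (R - C)ᵀ).trace := by
    simpa using (hA.mul_mul_conjTranspose_same (R - C)).trace_nonneg
  linarith

/-- Closed form of the Lagrange dual function of the orthogonal Procrustes
problem: for symmetric `γ` with `γ + yyᵀ` positive definite,
`inf_R [‖Ry − β‖²_F + tr{γ(RᵀR − I)}] = tr(βᵀβ) − tr(γ) − tr{yβᵀβyᵀ(γ + yyᵀ)⁻¹}`,
where `‖M‖²_F = tr(MᵀM)` and the infimum is over all `R ∈ ℝ^{p×p}`. -/
theorem procrustes_dual_closed_form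
    {p m : ℕ}
    (y β : Matrix (Fin p) (Fin m) ℝ)
    (γ : Matrix (Fin p) (Fin p) ℝ)
    (hγ : γ.IsSymm)
    (hpd : (γ + y * yᵀ).PosDef)
    (L : Matrix (Fin p) (Fin p) ℝ → ℝ)
    (hL : ∀ R, L R = ((R * y - β)ᵀ * (R * y - β)).trace
      + (γ * (Rᵀ * R - 1)).trace) :
    IsGLB (Set.range L)
      ((βᵀ * β).trace - γ.trace
        - (y * βᵀ * β * yᵀ * (γ + y * yᵀ)⁻¹).trace) := by
  set A := γ + y * yᵀ
  have hA : A.IsSymm := hγ.add (by rw [IsSymm, transpose_mul, transpose_transpose])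
  have hdet : IsUnit A.det := (isUnit_iff_isUnit_det A).1 hpd.isUnit
  have hcentre : (β * yᵀ * A⁻¹ * (β * yᵀ)ᵀ).trace = (y * βᵀ * β * yᵀ * A⁻¹).trace := by
    rw [transpose_mul, transpose_transpose, trace_mul_comm]
    simp only [Matrix.mul_assoc]
  have hsquare : L = fun R => ((R - β * yᵀ * A⁻¹) * A * (R - β * yᵀ * A⁻¹)ᵀ).trace
      + ((βᵀ * β).trace - γ.trace - (y * βᵀ * β * yᵀ * A⁻¹).trace) := by
    funext R
    rw [hL, trace_procrustes_lagrangian, sub_mul_nonsing_inv_mul_mul_transpose hA hdet,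
      trace_add, trace_sub, trace_sub, hcentre]
    simp only [transpose_mul, transpose_transpose]
    ring
  rw [hsquare]
  exact (isLeast_range_trace_mul_mul_transpose_add hpd.posSemidef _ _).isGLB
end

section
/- (Orthogonal Procrustes solution via SVD.) Let y, β ∈ ℝ^{p×m}, and suppose β yᵀ = U Σ Vᵀ where U, V ∈ ℝ^{p×p} are orthogonal (UᵀU = I, VᵀV = I) and Σ ∈ ℝ^{p×p} is diagonal with nonnegative diagonal entries. Then R̂ := U Vᵀ minimizes ‖R y − β‖²_F over all R ∈ ℝ^{p×p} with Rᵀ R = I; that is, ‖R̂ y − β‖²_F ≤ ‖R y − β‖²_F for every orthogonal R. -/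
open Matrix

lemma procrustes_expand {p m : ℕ}
    (y β : Matrix (Fin p) (Fin m) ℝ)
    (Q : Matrix (Fin p) (Fin p) ℝ) (hQ : Qᵀ * Q = 1) :
    ((Q * y - β)ᵀ * (Q * y - β)).trace
      = (yᵀ * y).trace + (βᵀ * β).trace - 2 * (Qᵀ * (β * yᵀ)).trace := by
  have key0 : yᵀ * Qᵀ * (Q * y) = yᵀ * y := by
    rw [Matrix.mul_assoc, ← Matrix.mul_assoc Qᵀ, hQ, Matrix.one_mul]
  have h1 : (Q * y - β)ᵀ * (Q * y - β)
      = yᵀ * y - yᵀ * (Qᵀ * β) - βᵀ * (Q * y) + βᵀ * β := by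
    rw [Matrix.transpose_sub, Matrix.transpose_mul, Matrix.sub_mul,
      Matrix.mul_sub, Matrix.mul_sub, key0, Matrix.mul_assoc yᵀ Qᵀ β]
    abel
  rw [h1, Matrix.trace_add, Matrix.trace_sub, Matrix.trace_sub]
  have h2 : (yᵀ * (Qᵀ * β)).trace = (Qᵀ * (β * yᵀ)).trace := by
    rw [Matrix.trace_mul_comm, Matrix.mul_assoc]
  have h3 : (βᵀ * (Q * y)).trace = (Qᵀ * (β * yᵀ)).trace := by
    rw [← Matrix.trace_transpose (βᵀ * (Q * y)), Matrix.transpose_mul,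
      Matrix.transpose_mul, Matrix.transpose_transpose, Matrix.mul_assoc, h2]
  rw [h2, h3]; ring

/-- **Orthogonal Procrustes solution via SVD.** If `βyᵀ = UΣVᵀ` with `U, V`
orthogonal and `Σ = S` diagonal with nonnegative entries, then `R̂ = UVᵀ`
minimizes `‖Ry − β‖²_F` (written as `tr((Ry−β)ᵀ(Ry−β))`) over orthogonal `R`. -/
theorem procrustes_svd_solution
    {p m : ℕ}
    (y β : Matrix (Fin p) (Fin m) ℝ)
    (U S V : Matrix (Fin p) (Fin p) ℝ)
    (hU : Uᵀ * U = 1)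
    (hV : Vᵀ * V = 1)
    (hSdiag : S.IsDiag)
    (hSnn : ∀ i, 0 ≤ S i i)
    (hsvd : β * yᵀ = U * S * Vᵀ) :
    ∀ R : Matrix (Fin p) (Fin p) ℝ, Rᵀ * R = 1 →
      ((U * Vᵀ * y - β)ᵀ * (U * Vᵀ * y - β)).trace
        ≤ ((R * y - β)ᵀ * (R * y - β)).trace := by
  intro R hR
  have hVV : V * Vᵀ = 1 := mul_eq_one_comm.mp hV
  have hRR : R * Rᵀ = 1 := mul_eq_one_comm.mp hR
  have hhat : (U * Vᵀ)ᵀ * (U * Vᵀ) = 1 := by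
    rw [Matrix.transpose_mul, Matrix.transpose_transpose, Matrix.mul_assoc,
      ← Matrix.mul_assoc Uᵀ, hU, Matrix.one_mul, hVV]
  rw [procrustes_expand y β _ hhat, procrustes_expand y β R hR]
  have key : (Rᵀ * (β * yᵀ)).trace ≤ ((U * Vᵀ)ᵀ * (β * yᵀ)).trace := by
    have hright : ((U * Vᵀ)ᵀ * (β * yᵀ)).trace = S.trace := by
      rw [hsvd, Matrix.transpose_mul, Matrix.transpose_transpose]
      rw [show V * Uᵀ * (U * S * Vᵀ) = V * S * Vᵀ by
        rw [Matrix.mul_assoc U S, Matrix.mul_assoc V Uᵀ, ← Matrix.mul_assoc Uᵀ U,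
          hU, Matrix.one_mul, ← Matrix.mul_assoc]]
      rw [Matrix.trace_mul_comm, ← Matrix.mul_assoc, hV, Matrix.one_mul]
    set M : Matrix (Fin p) (Fin p) ℝ := Vᵀ * Rᵀ * U with hM
    have hleft : (Rᵀ * (β * yᵀ)).trace = (M * S).trace := by
      rw [hsvd]
      have e1 : Rᵀ * (U * S * Vᵀ) = (Rᵀ * (U * S)) * Vᵀ := by
        simp [Matrix.mul_assoc]
      have e2 : M * S = Vᵀ * (Rᵀ * (U * S)) := by
        simp [hM, Matrix.mul_assoc]
      rw [e1, e2, Matrix.trace_mul_comm]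
    have hMorth : Mᵀ * M = 1 := by
      rw [hM, Matrix.transpose_mul, Matrix.transpose_mul,
        Matrix.transpose_transpose, Matrix.transpose_transpose]
      calc Uᵀ * (R * V) * (Vᵀ * Rᵀ * U)
          = Uᵀ * (R * (V * Vᵀ) * Rᵀ) * U := by simp [Matrix.mul_assoc]
        _ = 1 := by rw [hVV, Matrix.mul_one, hRR, Matrix.mul_one, hU]
    have hMle : ∀ i, M i i ≤ 1 := by
      intro i
      have h1 : (Mᵀ * M) i i = 1 := by rw [hMorth]; simp
      have h2 : ∑ j, M j i * M j i = 1 := by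
        simpa [Matrix.mul_apply, Matrix.transpose_apply] using h1
      have h3 : M i i * M i i ≤ ∑ j, M j i * M j i := by
        apply Finset.single_le_sum (f := fun j => M j i * M j i)
        · intro j _; exact mul_self_nonneg _
        · exact Finset.mem_univ i
      nlinarith [h3, h2]
    rw [hleft, hright]
    rw [Matrix.trace]
    apply Finset.sum_le_sum
    intro i _
    have hdiag : (M * S) i i = M i i * S i i := by
      rw [Matrix.mul_apply, Finset.sum_eq_single i]
      · intro j _ hj; rw [hSdiag hj, mul_zero]
      · intro h; exact absurd (Finset.mem_univ i) h
    rw [Matrix.diag_apply, hdiag]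
    exact mul_le_of_le_one_left (hSnn i) (hMle i)
  linarith
end
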